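/- arXiv:2504.14991 — 4 statements merged into one kernel-verified Lean document; each statement's English description precedes it below -/
import Mathlib

section
/- Let G be a nonempty finite index set and let w : G → ℝ be a probability vector with strictly positive entries. For all real numbers t1, t2 with 1 < t2 ≤ t1, one has (Σ_g w_g^{1-t2})^{1/t2} ≤ (Σ_g w_g^{1-t1})^{1/t1}. Equivalently, the signed fairness metric f(w;t) = sign(1−t)·(Σ_g w_g^{1-t})^{1/t} is monotonically nonincreasing in t on the interval (1, ∞). -/
/-! With `x g = (w g)⁻¹` one has `w g ^ (1 - t) = w g * x g ^ t`, so `(∑ g, w g ^ (1 - t)) ^ (1 / t)`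
is the weighted power mean of order `t` of `x`. Power means are nondecreasing in the order:
Jensen for the convex map `y ↦ y ^ (q / p)` compares the means of orders `p ≤ q`. -/

open Finset

namespace Real

theorem rpow_mean_le_rpow_mean {ι : Type*} (s : Finset ι) (w z : ι → ℝ)
    (hw : ∀ i ∈ s, 0 ≤ w i) (hw' : ∑ i ∈ s, w i = 1) (hz : ∀ i ∈ s, 0 ≤ z i)
    {p q : ℝ} (hp : 0 < p) (hpq : p ≤ q) :
    (∑ i ∈ s, w i * z i ^ p) ^ (1 / p) ≤ (∑ i ∈ s, w i * z i ^ q) ^ (1 / q) := by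
  have hzpq : ∀ i ∈ s, (z i ^ p) ^ (q / p) = z i ^ q := fun i hi => by
    rw [← rpow_mul (hz i hi), mul_div_cancel₀ q hp.ne']
  have jensen : ∑ i ∈ s, w i * z i ^ p ≤ (∑ i ∈ s, w i * z i ^ q) ^ (1 / (q / p)) := by
    rw [← sum_congr rfl fun i hi => congrArg (w i * ·) (hzpq i hi)]
    exact arith_mean_le_rpow_mean s w (z · ^ p) hw hw' (fun i hi => rpow_nonneg (hz i hi) p)
      ((one_le_div hp).mpr hpq)
  have hsum_nonneg : ∀ r : ℝ, 0 ≤ ∑ i ∈ s, w i * z i ^ r := fun r =>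
    sum_nonneg fun i hi => mul_nonneg (hw i hi) (rpow_nonneg (hz i hi) r)
  calc (∑ i ∈ s, w i * z i ^ p) ^ (1 / p)
      ≤ ((∑ i ∈ s, w i * z i ^ q) ^ (1 / (q / p))) ^ (1 / p) :=
        rpow_le_rpow (hsum_nonneg p) jensen (by positivity)
    _ = (∑ i ∈ s, w i * z i ^ q) ^ (1 / q) := by
        rw [← rpow_mul (hsum_nonneg q)]
        field_simp

theorem mul_inv_rpow_eq_rpow_one_sub {x : ℝ} (hx : 0 < x) (t : ℝ) :
    x * x⁻¹ ^ t = x ^ (1 - t) := by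
  rw [inv_rpow hx.le, ← rpow_neg hx.le, sub_eq_add_neg, rpow_add hx, rpow_one]

end Real

theorem fairness_metric_mono_gt_one_general
    {G : Type*} [Fintype G] (w : G → ℝ)
    (hpos : ∀ g, 0 < w g) (hsum : ∑ g, w g = 1)
    (t1 t2 : ℝ) (ht2 : 1 < t2) (ht : t2 ≤ t1) :
    (∑ g, w g ^ ((1 : ℝ) - t2)) ^ ((1 : ℝ) / t2) ≤
      (∑ g, w g ^ ((1 : ℝ) - t1)) ^ ((1 : ℝ) / t1) := by
  have h := Real.rpow_mean_le_rpow_mean univ w (fun g => (w g)⁻¹) (fun g _ => (hpos g).le) hsum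
    (fun g _ => (inv_pos.mpr (hpos g)).le) (zero_lt_one.trans ht2) ht
  simpa only [Real.mul_inv_rpow_eq_rpow_one_sub (hpos _)] using h

/-- Monotonicity of the signed fairness metric on `(1, ∞)`: for `1 < t2 ≤ t1`,
`(∑ g, w g ^ (1 - t2)) ^ (1 / t2) ≤ (∑ g, w g ^ (1 - t1)) ^ (1 / t1)`, i.e. the
signed metric `f(w;t) = sign(1-t) · (∑ g, w g ^ (1-t))^(1/t)` is nonincreasing in `t`
on `(1, ∞)`. -/
theorem fairness_metric_mono_gt_one
    {G : Type*} [Fintype G] [Nonempty G] (w : G → ℝ)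
    (hpos : ∀ g, 0 < w g) (hsum : ∑ g, w g = 1)
    (t1 t2 : ℝ) (ht2 : 1 < t2) (ht : t2 ≤ t1) :
    (∑ g, w g ^ ((1 : ℝ) - t2)) ^ ((1 : ℝ) / t2) ≤
      (∑ g, w g ^ ((1 : ℝ) - t1)) ^ ((1 : ℝ) / t1) :=
  fairness_metric_mono_gt_one_general w hpos hsum t1 t2 ht2 ht
end

section
/- Let G be a nonempty finite index set, v : G → ℝ a vector with strictly positive entries, and t a real number with 0 < t < 1. Set S = Σ_h v_h, and define F(v) = Σ_h (v_h/S)^{1-t}. Fix g ∈ G and let D_g be the partial derivative of F with respect to the coordinate v_g at the point v (i.e., the derivative at x = v_g of the function x ↦ (x/(S−v_g+x))^{1-t} + Σ_{h≠g} (v_h/(S−v_g+x))^{1-t}). Define the threshold θ = (Σ_h v_h / Σ_h v_h^{1-t})^{1/t}. Then D_g > 0 if and only if v_g < θ, D_g = 0 if and only if v_g = θ, and D_g < 0 if and only if v_g > θ. -/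
/-!
With `p = 1 - t`, `S = ∑ v_h` and `T = ∑ v_h ^ p`, differentiating term by term gives
`D_g = p / S ^ (p + 1) * (S * v_g ^ (-t) - T)`. The bracket is strictly decreasing in `v_g`
and vanishes exactly at `θ = (S / T) ^ (1 / t)`, so `D_g` has the sign of `θ - v_g`.
-/

open Finset Real

lemma hasDerivAt_div_add_self_rpow {c x p : ℝ} (hx : 0 < x) (hcx : 0 < c + x) :
    HasDerivAt (fun y => (y / (c + y)) ^ p) (p * c * x ^ (p - 1) / (c + x) ^ (p + 1)) x := by
  have hquot : HasDerivAt (fun y => y / (c + y)) (c / (c + x) ^ 2) x :=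
    ((hasDerivAt_id' x).fun_div ((hasDerivAt_id' x).const_add c) hcx.ne').congr_deriv
      (by ring)
  convert hquot.rpow_const (p := p) (Or.inl (div_pos hx hcx).ne') using 1
  rw [div_rpow hx.le hcx.le, rpow_add_one hcx.ne', rpow_sub_one hcx.ne']
  field_simp

lemma hasDerivAt_const_div_add_rpow {a c x p : ℝ} (ha : 0 < a) (hcx : 0 < c + x) :
    HasDerivAt (fun y => (a / (c + y)) ^ p) (-(p * a ^ p / (c + x) ^ (p + 1))) x := by
  have hquot : HasDerivAt (fun y => a / (c + y)) (-(a / (c + x) ^ 2)) x :=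
    ((hasDerivAt_const x a).fun_div ((hasDerivAt_id' x).const_add c) hcx.ne').congr_deriv
      (by ring)
  convert hquot.rpow_const (p := p) (Or.inl (div_pos ha hcx).ne') using 1
  rw [div_rpow ha.le hcx.le, rpow_add_one hcx.ne', rpow_sub_one hcx.ne', rpow_sub_one ha.ne']
  field_simp

lemma sign_eq_sign_sub_of_strictAntiOn {f : ℝ → ℝ} {s : Set ℝ} (hf : StrictAntiOn f s)
    {θ x : ℝ} (hθ : θ ∈ s) (hx : x ∈ s) (hfθ : f θ = 0) :
    SignType.sign (f x) = SignType.sign (θ - x) := by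
  rcases lt_trichotomy x θ with h | rfl | h
  · rw [sign_pos (hfθ ▸ hf hx hθ h), sign_pos (sub_pos.2 h)]
  · rw [hfθ, sub_self]
  · rw [sign_neg (hfθ ▸ hf hθ hx h), sign_neg (sub_neg.2 h)]

lemma pos_iff_and_eq_zero_iff_and_neg_iff_of_sign_eq {α β : Type*} [Zero α] [LinearOrder α]
    [Zero β] [LinearOrder β] {a : α} {b : β} (h : SignType.sign a = SignType.sign b) :
    (0 < a ↔ 0 < b) ∧ (a = 0 ↔ b = 0) ∧ (a < 0 ↔ b < 0) := by
  rw [← sign_eq_one_iff, ← sign_eq_one_iff, ← _root_.sign_eq_zero_iff (a := a),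
    ← _root_.sign_eq_zero_iff (a := b), ← sign_eq_neg_one_iff, ← sign_eq_neg_one_iff, h]
  exact ⟨Iff.rfl, Iff.rfl, Iff.rfl⟩

lemma sign_mul_rpow_neg_sub {S T t x : ℝ} (hS : 0 < S) (hT : 0 < T) (ht : 0 < t) (hx : 0 < x) :
    SignType.sign (S * x ^ (-t) - T) = SignType.sign ((S / T) ^ (1 / t) - x) := by
  have hanti : StrictAntiOn (fun y : ℝ => S * y ^ (-t) - T) (Set.Ioi 0) := fun a ha b hb hab =>
    sub_lt_sub_right (mul_lt_mul_of_pos_left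
      (strictAntiOn_rpow_Ioi_of_exponent_neg (neg_neg_of_pos ht) ha hb hab) hS) T
  refine sign_eq_sign_sub_of_strictAntiOn hanti (by positivity : (0 : ℝ) < _) hx ?_
  rw [← rpow_mul (by positivity), one_div_mul_eq_div, neg_div, div_self ht.ne', rpow_neg_one]
  field_simp
  ring

lemma hasDerivAt_sum_shares_rpow {G : Type*} [Fintype G] [DecidableEq G] {v : G → ℝ}
    (hv : ∀ h, 0 < v h) (p : ℝ) (g : G) :
    HasDerivAt
      (fun x => (x / (∑ h, v h - v g + x)) ^ p +
        ∑ h ∈ univ.erase g, (v h / (∑ h, v h - v g + x)) ^ p)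
      (p / (∑ h, v h) ^ (p + 1) * ((∑ h, v h) * v g ^ (p - 1) - ∑ h, v h ^ p)) (v g) := by
  have hS : 0 < ∑ h, v h - v g + v g := by
    rw [sub_add_cancel]; exact sum_pos (fun h _ => hv h) ⟨g, mem_univ g⟩
  refine ((hasDerivAt_div_add_self_rpow (hv g) hS).add
    (HasDerivAt.fun_sum fun h _ => hasDerivAt_const_div_add_rpow (hv h) hS)).congr_deriv ?_
  rw [sub_add_cancel] at hS ⊢
  rw [sum_neg_distrib, ← sum_div, ← mul_sum, sum_erase_eq_sub (mem_univ g),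
    rpow_sub_one (hv g).ne']
  have hvg := (hv g).ne'
  field_simp
  ring

theorem rich_poor_threshold_lt_one_general
    {G : Type*} [Fintype G] [DecidableEq G] (v : G → ℝ)
    (hpos : ∀ g, 0 < v g) (t : ℝ) (ht0 : 0 < t) (ht1 : t < 1)
    (S : ℝ) (hS : S = ∑ h, v h) (g : G) (Dg : ℝ)
    (hD : HasDerivAt
      (fun x : ℝ =>
        (x / (S - v g + x)) ^ ((1 : ℝ) - t) +
          ∑ h ∈ Finset.univ.erase g, (v h / (S - v g + x)) ^ ((1 : ℝ) - t))
      Dg (v g))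
    (θ : ℝ) (hθ : θ = ((∑ h, v h) / ∑ h, v h ^ ((1 : ℝ) - t)) ^ ((1 : ℝ) / t)) :
    (0 < Dg ↔ v g < θ) ∧ (Dg = 0 ↔ v g = θ) ∧ (Dg < 0 ↔ θ < v g) := by
  subst hS hθ
  have hSpos : 0 < ∑ h, v h := sum_pos (fun h _ => hpos h) ⟨g, mem_univ g⟩
  have hTpos : 0 < ∑ h, v h ^ (1 - t) :=
    sum_pos (fun h _ => rpow_pos_of_pos (hpos h) _) ⟨g, mem_univ g⟩
  have hsign : SignType.sign Dg =
      SignType.sign (((∑ h, v h) / ∑ h, v h ^ (1 - t)) ^ (1 / t) - v g) := by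
    rw [hD.unique (hasDerivAt_sum_shares_rpow hpos (1 - t) g), sign_mul,
      sign_pos (by have := sub_pos.2 ht1; positivity), one_mul, sub_sub_cancel_left,
      sign_mul_rpow_neg_sub hSpos hTpos ht0 (hpos g)]
  obtain ⟨hpos_iff, hzero_iff, hneg_iff⟩ := pos_iff_and_eq_zero_iff_and_neg_iff_of_sign_eq hsign
  exact ⟨hpos_iff.trans sub_pos, hzero_iff.trans (sub_eq_zero.trans eq_comm),
    hneg_iff.trans sub_neg⟩

/-- Rich/poor threshold for `0 < t < 1`. Let `S = ∑ h, v h`,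
`F(v) = ∑ h, (v h / S) ^ (1-t)`, and let `Dg` be the partial derivative of `F` in
the coordinate `v g` at `v`, i.e. the derivative at `x = v g` of
`x ↦ (x / (S - v g + x)) ^ (1-t) + ∑ _{h ≠ g} (v h / (S - v g + x)) ^ (1-t)`.
With threshold `θ = (∑ h, v h / ∑ h, v h ^ (1-t)) ^ (1/t)` we have
`Dg > 0 ↔ v g < θ`, `Dg = 0 ↔ v g = θ`, and `Dg < 0 ↔ v g > θ`. -/
theorem rich_poor_threshold_lt_one
    {G : Type*} [Fintype G] [Nonempty G] [DecidableEq G] (v : G → ℝ)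
    (hpos : ∀ g, 0 < v g) (t : ℝ) (ht0 : 0 < t) (ht1 : t < 1)
    (S : ℝ) (hS : S = ∑ h, v h) (g : G) (Dg : ℝ)
    (hD : HasDerivAt
      (fun x : ℝ =>
        (x / (S - v g + x)) ^ ((1 : ℝ) - t) +
          ∑ h ∈ Finset.univ.erase g, (v h / (S - v g + x)) ^ ((1 : ℝ) - t))
      Dg (v g))
    (θ : ℝ) (hθ : θ = ((∑ h, v h) / ∑ h, v h ^ ((1 : ℝ) - t)) ^ ((1 : ℝ) / t)) :
    (0 < Dg ↔ v g < θ) ∧ (Dg = 0 ↔ v g = θ) ∧ (Dg < 0 ↔ θ < v g) :=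
  rich_poor_threshold_lt_one_general v hpos t ht0 ht1 S hS g Dg hD θ hθ
end

section
/- Let G be a nonempty finite index set, v : G → ℝ a vector with strictly positive entries, and t a real number with t > 0. Set S = Σ_h v_h. Define the gradient-type vector ∇L with components (∇L)_g = v_g^{−t}, the accuracy direction α with components α_g = 1, and the fairness direction η with components η_g = 1 − v_g/S. Define the elasticities E_{r,p} = (v_r/v_p)^{−t} and k = (Σ_{p∈G} Σ_{r∈G, r≠p} v_p^{1−t}·E_{r,p}) / (Σ_{p∈G} v_p^{1−t}). Then the transfer ratio γ = ⟨∇L, η⟩ / ⟨∇L, α⟩ satisfies γ = 1 − 1/(1 + k). -/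
/-!
Write `A = ∑ v_g^{-t}`, `C = ∑ v_g^{1-t}`. Each weighted elasticity collapses,
`v_p^{1-t} E_{r,p} = v_p v_r^{-t}`, so the double sum over `r ≠ p` is the product
`S A` minus its diagonal `C`; hence `1 + k = S A / C`. On the other side
`⟨∇L, η⟩ = A - C / S` and `⟨∇L, α⟩ = A`, so both sides equal `1 - C / (S A)`.
-/

open Finset Real

theorem Finset.sum_sum_erase_mul {ι R : Type*} [DecidableEq ι] [CommRing R] (s : Finset ι)
    (f g : ι → R) :
    ∑ p ∈ s, ∑ r ∈ s.erase p, f p * g r =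
      (∑ p ∈ s, f p) * (∑ r ∈ s, g r) - ∑ p ∈ s, f p * g p := by
  rw [sum_mul_sum, ← sum_sub_distrib]
  exact sum_congr rfl fun p hp => sum_erase_eq_sub hp

theorem Real.mul_rpow_neg {x : ℝ} (hx : 0 < x) (t : ℝ) : x * x ^ (-t) = x ^ (1 - t) := by
  rw [sub_eq_neg_add, rpow_add_one hx.ne', mul_comm]

theorem Real.rpow_one_sub_mul_div_rpow_neg {x y : ℝ} (hx : 0 < x) (hy : 0 ≤ y) (t : ℝ) :
    x ^ (1 - t) * (y / x) ^ (-t) = x * y ^ (-t) := by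
  have hxt : x ^ (-t) ≠ 0 := (rpow_pos_of_pos hx _).ne'
  rw [← mul_rpow_neg hx, div_rpow hy hx.le]
  field_simp

theorem sub_div_div_self_eq_one_sub_one_div_one_add {A C S : ℝ} (hA : A ≠ 0) (hC : C ≠ 0)
    (hS : S ≠ 0) : (A - C / S) / A = 1 - 1 / (1 + (S * A - C) / C) := by
  field_simp
  ring

theorem transfer_ratio_eq_general
    {G : Type*} [Fintype G] [Nonempty G] [DecidableEq G] (v : G → ℝ)
    (hpos : ∀ g, 0 < v g) (t : ℝ)
    (S : ℝ) (hS : S = ∑ h, v h)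
    (E : G → G → ℝ) (hE : ∀ r p, E r p = (v r / v p) ^ (-t))
    (k : ℝ)
    (hk : k = (∑ p, ∑ r ∈ Finset.univ.erase p, v p ^ ((1 : ℝ) - t) * E r p) /
      (∑ p, v p ^ ((1 : ℝ) - t))) :
    (∑ g, v g ^ (-t) * (1 - v g / S)) / (∑ g, v g ^ (-t) * 1) = 1 - 1 / (1 + k) := by
  have hA : 0 < ∑ g, v g ^ (-t) :=
    sum_pos (fun g _ => rpow_pos_of_pos (hpos g) _) univ_nonempty
  have hC : 0 < ∑ g, v g ^ ((1 : ℝ) - t) :=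
    sum_pos (fun g _ => rpow_pos_of_pos (hpos g) _) univ_nonempty
  have hS₀ : 0 < S := hS ▸ sum_pos (fun g _ => hpos g) univ_nonempty
  have hnum : ∑ g, v g ^ (-t) * (1 - v g / S) =
      ∑ g, v g ^ (-t) - (∑ g, v g ^ ((1 : ℝ) - t)) / S := by
    rw [sum_div, ← sum_sub_distrib]
    refine sum_congr rfl fun g _ => ?_
    rw [← mul_rpow_neg (hpos g)]
    ring
  have hk' : k = (S * ∑ g, v g ^ (-t) - ∑ g, v g ^ ((1 : ℝ) - t)) / ∑ g, v g ^ ((1 : ℝ) - t) := by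
    simp only [hk, hE, rpow_one_sub_mul_div_rpow_neg (hpos _) (hpos _).le, sum_sum_erase_mul,
      mul_rpow_neg (hpos _), ← hS]
  simp only [hnum, hk', mul_one]
  exact sub_div_div_self_eq_one_sub_one_div_one_add hA.ne' hC.ne' hS₀.ne'

/-- Transfer ratio via elasticities. With `S = ∑ h, v h`, gradient `∇L g = v g ^ (-t)`,
accuracy direction `α g = 1`, fairness direction `η g = 1 - v g / S`, elasticities
`E r p = (v r / v p) ^ (-t)` and
`k = (∑ p, ∑ _{r ≠ p}, v p ^ (1-t) * E r p) / (∑ p, v p ^ (1-t))`, the transfer ratio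
`γ = ⟨∇L, η⟩ / ⟨∇L, α⟩` satisfies `γ = 1 - 1 / (1 + k)`. -/
theorem transfer_ratio_eq
    {G : Type*} [Fintype G] [Nonempty G] [DecidableEq G] (v : G → ℝ)
    (hpos : ∀ g, 0 < v g) (t : ℝ) (ht : 0 < t)
    (S : ℝ) (hS : S = ∑ h, v h)
    (E : G → G → ℝ) (hE : ∀ r p, E r p = (v r / v p) ^ (-t))
    (k : ℝ)
    (hk : k = (∑ p, ∑ r ∈ Finset.univ.erase p, v p ^ ((1 : ℝ) - t) * E r p) /
      (∑ p, v p ^ ((1 : ℝ) - t))) :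
    (∑ g, v g ^ (-t) * (1 - v g / S)) / (∑ g, v g ^ (-t) * 1) = 1 - 1 / (1 + k) :=
  transfer_ratio_eq_general v hpos t S hS E hE k hk
end

section
/- Let G be a finite index set of cardinality n ≥ 1 and let v : G → ℝ be a vector with strictly positive entries. Define the paper's fairness metric at tax base t = −1: f(v;−1) = sign(1−(−1))·(Σ_g v̄_g^{2})^{1/(−1)} = (Σ_g v̄_g^2)^{−1}, where v̄_g = v_g/Σ_h v_h. Then f(v;−1) = (Σ_g v_g)^2 / (Σ_g v_g^2) = n · J(v), where J(v) = (Σ_g v_g)^2 / (n · Σ_g v_g^2) is Jain's fairness index of v. -/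
namespace Fairness

variable {G : Type*} [Fintype G]

noncomputable def fairnessMetric (v : G → ℝ) (t : ℝ) : ℝ :=
  Real.sign (1 - t) * (∑ g, (v g / ∑ h, v h) ^ (1 - t)) ^ (1 / t)

noncomputable def jainIndex (v : G → ℝ) : ℝ :=
  (∑ g, v g) ^ 2 / (Fintype.card G * ∑ g, v g ^ 2)

theorem fairnessMetric_neg_one (v : G → ℝ) :
    fairnessMetric v (-1) = (∑ g, v g) ^ 2 / ∑ g, v g ^ 2 := by
  have hsign : Real.sign (1 - (-1 : ℝ)) = 1 := Real.sign_of_pos (by norm_num)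
  have hsum : ∑ g, (v g / ∑ h, v h) ^ (1 - (-1 : ℝ)) = (∑ g, v g ^ 2) / (∑ h, v h) ^ 2 := by
    rw [Finset.sum_div]
    refine Finset.sum_congr rfl fun g _ => ?_
    rw [show (1 : ℝ) - -1 = 2 by norm_num, Real.rpow_two, div_pow]
  rw [fairnessMetric, hsign, hsum, one_mul, show (1 : ℝ) / -1 = -1 by norm_num,
    Real.rpow_neg_one, inv_div]

theorem card_mul_jainIndex [Nonempty G] (v : G → ℝ) :
    Fintype.card G * jainIndex v = (∑ g, v g) ^ 2 / ∑ g, v g ^ 2 := by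
  have hcard : (Fintype.card G : ℝ) ≠ 0 := Nat.cast_ne_zero.mpr Fintype.card_ne_zero
  rw [jainIndex, mul_div_assoc', mul_div_mul_left _ _ hcard]

end Fairness

theorem fairness_metric_neg_one_eq_jain_general
    {G : Type*} [Fintype G] [Nonempty G] (v : G → ℝ) :
    (Real.sign (1 - (-1 : ℝ)) *
          (∑ g, (v g / ∑ h, v h) ^ ((1 : ℝ) - (-1 : ℝ))) ^ ((1 : ℝ) / (-1 : ℝ)) =
        (∑ g, v g) ^ 2 / (∑ g, v g ^ 2)) ∧
      (Real.sign (1 - (-1 : ℝ)) *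
          (∑ g, (v g / ∑ h, v h) ^ ((1 : ℝ) - (-1 : ℝ))) ^ ((1 : ℝ) / (-1 : ℝ)) =
        (Fintype.card G : ℝ) *
          ((∑ g, v g) ^ 2 / ((Fintype.card G : ℝ) * ∑ g, v g ^ 2))) := by
  have hf : Fairness.fairnessMetric v (-1) = (∑ g, v g) ^ 2 / ∑ g, v g ^ 2 :=
    Fairness.fairnessMetric_neg_one v
  exact ⟨hf, hf.trans (Fairness.card_mul_jainIndex v).symm⟩

/-- At tax base `t = -1` the general fairness metric
`f(v;-1) = sign(1-(-1)) · (∑ g, v̄ g ^ (1-(-1))) ^ (1/(-1))` (with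
`v̄ g = v g / ∑ h, v h`) equals `(∑ g, v g)^2 / (∑ g, v g ^ 2)`, which is
`n · J(v)` where `J(v) = (∑ g, v g)^2 / (n · ∑ g, v g ^ 2)` is Jain's fairness
index and `n = |G|`. -/
theorem fairness_metric_neg_one_eq_jain
    {G : Type*} [Fintype G] [Nonempty G] (v : G → ℝ)
    (hpos : ∀ g, 0 < v g) :
    (Real.sign (1 - (-1 : ℝ)) *
          (∑ g, (v g / ∑ h, v h) ^ ((1 : ℝ) - (-1 : ℝ))) ^ ((1 : ℝ) / (-1 : ℝ)) =
        (∑ g, v g) ^ 2 / (∑ g, v g ^ 2)) ∧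
      (Real.sign (1 - (-1 : ℝ)) *
          (∑ g, (v g / ∑ h, v h) ^ ((1 : ℝ) - (-1 : ℝ))) ^ ((1 : ℝ) / (-1 : ℝ)) =
        (Fintype.card G : ℝ) *
          ((∑ g, v g) ^ 2 / ((Fintype.card G : ℝ) * ∑ g, v g ^ 2))) :=
  fairness_metric_neg_one_eq_jain_general v
end
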